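/- Let θ̂ := (ρ+Γ(σ−1))/(1+f(σ−1)), A := θ̂^{−σ} and B̂ := −ΓA/(Kρ), and fix i ∈ F. Define v(x) := A⟨e,x⟩^{1−σ}/(1−σ) + B̂ for x ∈ ℝⁿ₊ \ {0}. Then v is continuously differentiable on ℝⁿ₊ \ {0} with ∂v/∂x_j(x) = A⟨e,x⟩^{−σ} > 0 for every j, and for every x ∈ ℝⁿ₊ \ {0}: ρ v(x) = (σ/(1−σ)) (∂v/∂x_i(x))^{1−1/σ} + ⟨∇v(x), (D+Bᵀ)x⟩ + Γ(1 − ⟨e,x⟩^{σ−1}/K) ⟨∇v(x), x⟩ − θ̂⟨e,x⟩ · ∑_{j∈F, j≠i} ∂v/∂x_j(x). Moreover, the supremum over c > 0 of c^{1−σ}/(1−σ) − c·∂v/∂x_i(x) equals (σ/(1−σ))(∂v/∂x_i(x))^{1−1/σ} and is attained uniquely at c = θ̂⟨e,x⟩. -/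

import Mathlib

open Matrix Finset

/-- The diagonal matrix of outflows: `D i i = -∑_{j ≠ i} B i j`. -/
noncomputable def Dmat {n : ℕ} (B : Matrix (Fin n) (Fin n) ℝ) : Matrix (Fin n) (Fin n) ℝ :=
  Matrix.diagonal fun i => -∑ j ∈ Finset.univ.erase i, B i j

/-- The continuous linear functional `y ↦ ∑ j, p j * y j` on `ℝⁿ`. -/
noncomputable def dotCLM {n : ℕ} (p : Fin n → ℝ) : (Fin n → ℝ) →L[ℝ] ℝ :=
  LinearMap.toContinuousLinearMap
    { toFun := fun y => ∑ j, p j * y j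
      map_add' := fun y z => by
        simp [Pi.add_apply, mul_add, Finset.sum_add_distrib]
      map_smul' := fun a y => by
        simp only [Pi.smul_apply, smul_eq_mul, RingHom.id_apply, Finset.mul_sum]
        exact Finset.sum_congr rfl fun j _ => by ring }

/-! The value function depends on `x` only through `s = ⟨e, x⟩`, so its gradient is the constant
vector `A s^{-σ}`. The transport term `⟨∇v, (D + Bᵀ)x⟩` vanishes because the rows of `D + B` sum
to zero, and every remaining term of the HJB equation is a multiple of `A s^{1-σ}` (or the
constant `ΓA/K`, absorbed by `B̂`); the multiples balance exactly by the choice of `θ̂`.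
Since `A = θ̂^{-σ}`, the marginal value `A s^{-σ}` equals `c₀^{-σ}` for `c₀ = θ̂ s`: this is the
first-order condition of the Hamiltonian `c ↦ u(c) - c c₀^{-σ}`, which increases on `(0, c₀]` and
decreases on `[c₀, ∞)`, so `c₀` is its unique maximiser. -/

lemma Dmat_add_mulVec_one {n : ℕ} {B : Matrix (Fin n) (Fin n) ℝ} (hdiag : ∀ i, B i i = 0) :
    (Dmat B + B) *ᵥ 1 = 0 := by
  ext k
  simp only [mulVec, dotProduct, Pi.one_apply, mul_one, Matrix.add_apply, Finset.sum_add_distrib,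
    Dmat, diagonal_apply, Finset.sum_ite_eq, if_pos (mem_univ k), Pi.zero_apply]
  rw [← Finset.add_sum_erase _ _ (mem_univ k), hdiag k]
  ring

lemma sum_transpose_Dmat_add_mulVec {n : ℕ} {B : Matrix (Fin n) (Fin n) ℝ}
    (hdiag : ∀ i, B i i = 0) (x : Fin n → ℝ) : ∑ j, ((Dmat B + B)ᵀ *ᵥ x) j = 0 := by
  rw [← dotProduct_one, mulVec_transpose, ← dotProduct_mulVec, Dmat_add_mulVec_one hdiag,
    dotProduct_zero]

lemma HasDerivAt.hasFDerivAt_comp_sum {n : ℕ} {g : ℝ → ℝ} {g' : ℝ} {x : Fin n → ℝ}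
    (hg : HasDerivAt g g' (∑ j, x j)) :
    HasFDerivAt (fun y => g (∑ j, y j)) (dotCLM fun _ => g') x := by
  have hsum : (fun y : Fin n → ℝ => ∑ j, y j) = dotCLM fun _ => 1 := by
    ext y; simp [dotCLM]
  refine (hg.comp_hasFDerivAt x (hsum ▸ (dotCLM fun _ => (1 : ℝ)).hasFDerivAt)).congr_fderiv ?_
  ext y; simp [dotCLM, Finset.mul_sum]

lemma hasDerivAt_rpow_one_sub_div {σ t : ℝ} (hσ : σ ≠ 1) (ht : 0 < t) :
    HasDerivAt (fun t => t ^ (1 - σ) / (1 - σ)) (t ^ (-σ)) t := by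
  have h := (Real.hasDerivAt_rpow_const (p := 1 - σ) (Or.inl ht.ne')).div_const (1 - σ)
  rwa [sub_sub_cancel_left, mul_div_cancel_left₀ _ (sub_ne_zero.2 hσ.symm)] at h

lemma rpow_neg_rpow_one_sub_inv {σ c : ℝ} (hσ : σ ≠ 0) (hc : 0 ≤ c) :
    (c ^ (-σ)) ^ (1 - 1 / σ) = c ^ (1 - σ) := by
  rw [← Real.rpow_mul hc]
  congr 1
  field_simp
  ring

lemma rpow_one_sub_eq_mul_rpow_neg {σ c : ℝ} (hc : 0 < c) : c ^ (1 - σ) = c * c ^ (-σ) := by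
  rw [sub_eq_neg_add, Real.rpow_add_one hc.ne', mul_comm]

lemma value_hjb_identity {σ Γ K ρ θ A f s : ℝ} (hσ : σ ≠ 1) (hK : K ≠ 0) (hρ : ρ ≠ 0)
    (hs : 0 < s) (hθ : θ * (1 + f * (σ - 1)) = ρ + Γ * (σ - 1)) :
    ρ * (A * s ^ (1 - σ) / (1 - σ) + -(Γ * A) / (K * ρ)) =
      σ / (1 - σ) * (θ * (A * s ^ (1 - σ)))
        + Γ * (1 - s ^ (σ - 1) / K) * (A * s ^ (-σ) * s) - θ * s * ((f - 1) * (A * s ^ (-σ))) := by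
  have hpow : s ^ (1 - σ) = s ^ (-σ) * s := by rw [rpow_one_sub_eq_mul_rpow_neg hs, mul_comm]
  have hinv : s ^ (σ - 1) * s ^ (1 - σ) = 1 := by rw [← Real.rpow_add hs]; norm_num
  have h1σ : 1 - σ ≠ 0 := sub_ne_zero.2 hσ.symm
  field_simp
  linear_combination -(A * K * s ^ (1 - σ)) * hθ
    + (A * (1 - σ) * Γ * (K - s ^ (σ - 1)) - A * (1 - σ) * K * θ * (f - 1)) * hpow
    + (A * (1 - σ) * Γ) * hinv

section Hamiltonian

variable {σ : ℝ}

lemma hasDerivAt_hamiltonian (hσ1 : σ ≠ 1) (q : ℝ) {c : ℝ} (hc : 0 < c) :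
    HasDerivAt (fun c => c ^ (1 - σ) / (1 - σ) - c * q) (c ^ (-σ) - q) c :=
  (hasDerivAt_rpow_one_sub_div hσ1 hc).sub (hasDerivAt_mul_const q)

lemma strictMonoOn_hamiltonian (hσ : 0 < σ) (hσ1 : σ ≠ 1) (c₀ : ℝ) :
    StrictMonoOn (fun c => c ^ (1 - σ) / (1 - σ) - c * c₀ ^ (-σ)) (Set.Ioc 0 c₀) := by
  refine strictMonoOn_of_hasDerivWithinAt_pos (f' := fun c => c ^ (-σ) - c₀ ^ (-σ))
    (convex_Ioc 0 c₀)
    (fun c hc => (hasDerivAt_hamiltonian hσ1 _ hc.1).continuousAt.continuousWithinAt)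
    (fun c hc => ?_) (fun c hc => ?_) <;> rw [interior_Ioc] at hc
  · exact (hasDerivAt_hamiltonian hσ1 _ hc.1).hasDerivWithinAt
  · exact sub_pos.2 (Real.rpow_lt_rpow_of_neg hc.1 hc.2 (neg_lt_zero.2 hσ))

lemma strictAntiOn_hamiltonian (hσ : 0 < σ) (hσ1 : σ ≠ 1) {c₀ : ℝ} (hc₀ : 0 < c₀) :
    StrictAntiOn (fun c => c ^ (1 - σ) / (1 - σ) - c * c₀ ^ (-σ)) (Set.Ici c₀) := by
  refine strictAntiOn_of_hasDerivWithinAt_neg (f' := fun c => c ^ (-σ) - c₀ ^ (-σ))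
    (convex_Ici c₀)
    (fun c hc => (hasDerivAt_hamiltonian hσ1 _ (hc₀.trans_le hc)).continuousAt.continuousWithinAt)
    (fun c hc => ?_) (fun c hc => ?_) <;> rw [interior_Ici] at hc
  · exact (hasDerivAt_hamiltonian hσ1 _ (hc₀.trans hc)).hasDerivWithinAt
  · exact sub_neg.2 (Real.rpow_lt_rpow_of_neg hc₀ hc (neg_lt_zero.2 hσ))

lemma hamiltonian_lt_of_ne (hσ : 0 < σ) (hσ1 : σ ≠ 1) {c₀ c : ℝ} (hc₀ : 0 < c₀) (hc : 0 < c)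
    (hne : c ≠ c₀) :
    c ^ (1 - σ) / (1 - σ) - c * c₀ ^ (-σ) < c₀ ^ (1 - σ) / (1 - σ) - c₀ * c₀ ^ (-σ) := by
  rcases hne.lt_or_gt with hlt | hgt
  · exact strictMonoOn_hamiltonian hσ hσ1 c₀ ⟨hc, hlt.le⟩ ⟨hc₀, le_rfl⟩ hlt
  · exact strictAntiOn_hamiltonian hσ hσ1 hc₀ Set.self_mem_Ici hgt.le hgt

lemma hamiltonian_max_eq (hσ : 0 < σ) (hσ1 : σ ≠ 1) {c₀ : ℝ} (hc₀ : 0 < c₀) :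
    c₀ ^ (1 - σ) / (1 - σ) - c₀ * c₀ ^ (-σ) = σ / (1 - σ) * (c₀ ^ (-σ)) ^ (1 - 1 / σ) := by
  rw [rpow_neg_rpow_one_sub_inv hσ.ne' hc₀.le, ← rpow_one_sub_eq_mul_rpow_neg hc₀]
  field_simp [sub_ne_zero.2 hσ1.symm]
  ring

lemma isGreatest_hamiltonian (hσ : 0 < σ) (hσ1 : σ ≠ 1) {c₀ : ℝ} (hc₀ : 0 < c₀) :
    IsGreatest ((fun c => c ^ (1 - σ) / (1 - σ) - c * c₀ ^ (-σ)) '' Set.Ioi 0)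
      (σ / (1 - σ) * (c₀ ^ (-σ)) ^ (1 - 1 / σ)) := by
  refine ⟨⟨c₀, hc₀, hamiltonian_max_eq hσ hσ1 hc₀⟩, ?_⟩
  rintro _ ⟨c, hc, rfl⟩
  rw [← hamiltonian_max_eq hσ hσ1 hc₀]
  rcases eq_or_ne c c₀ with rfl | hne
  · exact le_rfl
  · exact (hamiltonian_lt_of_ne hσ hσ1 hc₀ hc hne).le

lemma eq_of_hamiltonian_eq_max (hσ : 0 < σ) (hσ1 : σ ≠ 1) {c₀ c : ℝ} (hc₀ : 0 < c₀) (hc : 0 < c)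
    (h : c ^ (1 - σ) / (1 - σ) - c * c₀ ^ (-σ) = σ / (1 - σ) * (c₀ ^ (-σ)) ^ (1 - 1 / σ)) :
    c = c₀ := by
  by_contra hne
  rw [← hamiltonian_max_eq hσ hσ1 hc₀] at h
  exact (hamiltonian_lt_of_ne hσ hσ1 hc₀ hc hne).ne h

end Hamiltonian

theorem stmt5_general {n : ℕ} (B : Matrix (Fin n) (Fin n) ℝ)
    (hdiag : ∀ i, B i i = 0)
    (F : Finset (Fin n)) (i : Fin n) (hi : i ∈ F)
    (σ Γ K ρ : ℝ) (hσ : 1 < σ) (hΓ : 0 < Γ) (hK : 0 < K) (hρ : 0 < ρ)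
    (θhat A Bhat : ℝ)
    (hθhat : θhat = (ρ + Γ * (σ - 1)) / (1 + F.card * (σ - 1)))
    (hA : A = θhat ^ (-σ)) (hBhat : Bhat = -(Γ * A) / (K * ρ))
    (v : (Fin n → ℝ) → ℝ)
    (hv : ∀ x : Fin n → ℝ, v x = A * (∑ j, x j) ^ (1 - σ) / (1 - σ) + Bhat) :
    ∀ x : Fin n → ℝ, (∀ j, 0 ≤ x j) → x ≠ 0 →
      (0 < A * (∑ j, x j) ^ (-σ)) ∧
      HasFDerivAt v (dotCLM fun _ => A * (∑ j, x j) ^ (-σ)) x ∧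
      (ρ * v x = (σ / (1 - σ)) * (A * (∑ j, x j) ^ (-σ)) ^ (1 - 1 / σ)
        + (∑ j, (A * (∑ j, x j) ^ (-σ)) * (((Dmat B + B)ᵀ *ᵥ x) j))
        + Γ * (1 - (∑ j, x j) ^ (σ - 1) / K) * (∑ j, (A * (∑ j, x j) ^ (-σ)) * x j)
        - θhat * (∑ j, x j) * (∑ _j ∈ F.erase i, A * (∑ j, x j) ^ (-σ))) ∧
      IsGreatest ((fun c => c ^ (1 - σ) / (1 - σ) - c * (A * (∑ j, x j) ^ (-σ))) ''
          Set.Ioi (0 : ℝ))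
        ((σ / (1 - σ)) * (A * (∑ j, x j) ^ (-σ)) ^ (1 - 1 / σ)) ∧
      (∀ c : ℝ, 0 < c →
        c ^ (1 - σ) / (1 - σ) - c * (A * (∑ j, x j) ^ (-σ))
          = (σ / (1 - σ)) * (A * (∑ j, x j) ^ (-σ)) ^ (1 - 1 / σ) →
        c = θhat * (∑ j, x j)) := by
  intro x hx hx0
  have hs : 0 < ∑ j, x j := Fintype.sum_pos (lt_of_le_of_ne hx hx0.symm)
  have hden : 0 < 1 + F.card * (σ - 1) := by
    have := sub_pos.2 hσ; positivity
  have hθ : 0 < θhat := hθhat ▸ div_pos (by nlinarith) hden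
  have hθeq : θhat * (1 + F.card * (σ - 1)) = ρ + Γ * (σ - 1) := by
    rw [hθhat, div_mul_cancel₀ _ hden.ne']
  have hq : A * (∑ j, x j) ^ (-σ) = (θhat * ∑ j, x j) ^ (-σ) := by
    rw [hA, Real.mul_rpow hθ.le hs.le]
  have hc₀ : 0 < θhat * ∑ j, x j := mul_pos hθ hs
  have hσ0 : 0 < σ := by linarith
  refine ⟨hq ▸ Real.rpow_pos_of_pos hc₀ _, ?_, ?_, hq ▸ isGreatest_hamiltonian hσ0 hσ.ne' hc₀,
    fun c hc h => eq_of_hamiltonian_eq_max hσ0 hσ.ne' hc₀ hc (hq ▸ h)⟩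
  · have hv' : v = fun y => A * ((∑ j, y j) ^ (1 - σ) / (1 - σ)) + Bhat :=
      funext fun y => by rw [hv, mul_div_assoc]
    rw [hv']
    exact ((hasDerivAt_rpow_one_sub_div hσ.ne' hs).const_mul A |>.add_const Bhat)
      |>.hasFDerivAt_comp_sum
  · have hpow : (A * (∑ j, x j) ^ (-σ)) ^ (1 - 1 / σ) = θhat * (A * (∑ j, x j) ^ (1 - σ)) := by
      rw [hq, rpow_neg_rpow_one_sub_inv hσ0.ne' hc₀.le, Real.mul_rpow hθ.le hs.le,
        rpow_one_sub_eq_mul_rpow_neg hθ, hA]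
      ring
    rw [hpow, hv, hBhat, ← Finset.mul_sum, ← Finset.mul_sum, sum_transpose_Dmat_add_mulVec hdiag,
      mul_zero, add_zero, Finset.sum_const, card_erase_of_mem hi, nsmul_eq_mul,
      Nat.cast_pred (card_pos.2 ⟨i, hi⟩)]
    exact value_hjb_identity hσ.ne' hK.ne' hρ.ne' hs hθeq

/-- Verification of the HJB equation of player `i` in the logistic framework (S1)(U1):
with `θ̂ = (ρ+Γ(σ−1))/(1+f(σ−1))`, `A = θ̂^{−σ}`, `B̂ = −ΓA/(Kρ)`, the function
`v(x) = A⟨e,x⟩^{1−σ}/(1−σ) + B̂` is differentiable on `ℝⁿ₊ \ {0}` with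
`∂v/∂x_j(x) = A⟨e,x⟩^{−σ} > 0`, satisfies player `i`'s HJB equation when every other
player `j ∈ F` extracts `θ̂⟨e,x⟩`, and the Hamiltonian supremum is attained uniquely at
`c = θ̂⟨e,x⟩`. -/
theorem stmt5 {n : ℕ} (B : Matrix (Fin n) (Fin n) ℝ)
    (hB : ∀ i j, 0 ≤ B i j) (hdiag : ∀ i, B i i = 0)
    (F : Finset (Fin n)) (hF : F.Nonempty) (i : Fin n) (hi : i ∈ F)
    (σ Γ K ρ : ℝ) (hσ : 1 < σ) (hΓ : 0 < Γ) (hK : 0 < K) (hρ : 0 < ρ)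
    (θhat A Bhat : ℝ)
    (hθhat : θhat = (ρ + Γ * (σ - 1)) / (1 + F.card * (σ - 1)))
    (hA : A = θhat ^ (-σ)) (hBhat : Bhat = -(Γ * A) / (K * ρ))
    (v : (Fin n → ℝ) → ℝ)
    (hv : ∀ x : Fin n → ℝ, v x = A * (∑ j, x j) ^ (1 - σ) / (1 - σ) + Bhat) :
    ∀ x : Fin n → ℝ, (∀ j, 0 ≤ x j) → x ≠ 0 →
      (0 < A * (∑ j, x j) ^ (-σ)) ∧
      HasFDerivAt v (dotCLM fun _ => A * (∑ j, x j) ^ (-σ)) x ∧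
      (ρ * v x = (σ / (1 - σ)) * (A * (∑ j, x j) ^ (-σ)) ^ (1 - 1 / σ)
        + (∑ j, (A * (∑ j, x j) ^ (-σ)) * (((Dmat B + B)ᵀ *ᵥ x) j))
        + Γ * (1 - (∑ j, x j) ^ (σ - 1) / K) * (∑ j, (A * (∑ j, x j) ^ (-σ)) * x j)
        - θhat * (∑ j, x j) * (∑ _j ∈ F.erase i, A * (∑ j, x j) ^ (-σ))) ∧
      IsGreatest ((fun c => c ^ (1 - σ) / (1 - σ) - c * (A * (∑ j, x j) ^ (-σ))) ''
          Set.Ioi (0 : ℝ))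
        ((σ / (1 - σ)) * (A * (∑ j, x j) ^ (-σ)) ^ (1 - 1 / σ)) ∧
      (∀ c : ℝ, 0 < c →
        c ^ (1 - σ) / (1 - σ) - c * (A * (∑ j, x j) ^ (-σ))
          = (σ / (1 - σ)) * (A * (∑ j, x j) ^ (-σ)) ^ (1 - 1 / σ) →
        c = θhat * (∑ j, x j)) :=
  stmt5_general B hdiag F i hi σ Γ K ρ hσ hΓ hK hρ θhat A Bhat hθhat hA hBhat v hv
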